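/- arXiv:2212.05280 — 4 statements merged into one kernel-verified Lean document; each statement's English description precedes it below -/
import Mathlib

section
/- Let y* ∈ ℝ^{Z+1} be defined by y*_0 = K_{σ(τ+1)}/ρ_{σ(τ+1)}, y*_{σ(k)} = K_{σ(k)} − ρ_{σ(k)} K_{σ(τ+1)}/ρ_{σ(τ+1)} for 1 ≤ k ≤ τ, and y*_{σ(k)} = 0 for k ≥ τ+1. Then y* is an optimal solution of the dual linear program [LD]: it is feasible for [LD], and for every feasible point y of [LD] one has B y*_0 + Σ_{k=1}^{Z} r_k y*_k ≤ B y_0 + Σ_{k=1}^{Z} r_k y_k. -/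
/-!
Let `c = K_{σ(τ)} / ρ_{σ(τ)}` be the threshold ratio (items are counted from `0`, so `σ(τ)` is the
paper's `σ(τ+1)`). Sorting gives `y*_k = max (K_k - ρ_k c) 0`, so `y*` is feasible. For a feasible
`(y₀, y)` and any set `S` of items, `r ≥ 0` and `y_k ≥ K_k - ρ_k y₀` give
`B y₀ + ∑ r y ≥ B y₀ + ∑_{S} r_k (K_k - ρ_k y₀)`
`            = B c + ∑_{S} r_k (K_k - ρ_k c) + (y₀ - c)(B - ∑_{S} ρ_k r_k)`.
Taking for `S` the items before `σ(τ)` when `y₀ ≥ c`, and those up to `σ(τ)` when `y₀ < c`,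
the choice of `τ` makes the last term nonnegative, and in both cases the middle sum is the
objective of `y*` (the item `σ(τ)` contributes `0`).
-/

open Finset

namespace FractionalKnapsackDual

theorem sub_mul_nonneg_iff_le_div {a b x : ℝ} (ha : 0 < a) : 0 ≤ b - a * x ↔ x ≤ b / a := by
  rw [le_div_iff₀ ha, sub_nonneg, mul_comm]

theorem sub_mul_nonpos_iff_div_le {a b x : ℝ} (ha : 0 < a) : b - a * x ≤ 0 ↔ b / a ≤ x := by
  rw [div_le_iff₀ ha, sub_nonpos, mul_comm]

variable {ι : Type*} [Fintype ι] {ρ r K : ι → ℝ} {B c y₀ : ℝ} {y : ι → ℝ}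

theorem sum_mul_sub_le_sum_mul (hr : ∀ k, 0 ≤ r k) (hy : ∀ k, 0 ≤ y k)
    (hfeas : ∀ k, K k ≤ ρ k * y₀ + y k) (S : Finset ι) :
    ∑ k ∈ S, r k * (K k - ρ k * y₀) ≤ ∑ k, r k * y k :=
  calc ∑ k ∈ S, r k * (K k - ρ k * y₀)
      ≤ ∑ k ∈ S, r k * y k :=
        sum_le_sum fun k _ => mul_le_mul_of_nonneg_left (by linarith [hfeas k]) (hr k)
    _ ≤ ∑ k, r k * y k :=
        sum_le_sum_of_subset_of_nonneg (subset_univ S) fun k _ _ => mul_nonneg (hr k) (hy k)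

omit [Fintype ι] in
theorem sum_mul_sub_eq (S : Finset ι) (c : ℝ) :
    ∑ k ∈ S, r k * (K k - ρ k * y₀) =
      ∑ k ∈ S, r k * (K k - ρ k * c) - (y₀ - c) * ∑ k ∈ S, ρ k * r k := by
  rw [mul_sum, ← sum_sub_distrib]
  exact sum_congr rfl fun k _ => by ring

theorem add_sum_le_dual_objective (hr : ∀ k, 0 ≤ r k) {S T : Finset ι}
    (hS : ∑ k ∈ S, ρ k * r k ≤ B) (hT : B ≤ ∑ k ∈ T, ρ k * r k)
    (hST : ∑ k ∈ S, r k * (K k - ρ k * c) = ∑ k ∈ T, r k * (K k - ρ k * c))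
    (hy : ∀ k, 0 ≤ y k) (hfeas : ∀ k, K k ≤ ρ k * y₀ + y k) :
    B * c + ∑ k ∈ S, r k * (K k - ρ k * c) ≤ B * y₀ + ∑ k, r k * y k := by
  rcases le_or_gt c y₀ with hcy | hyc
  · have h := sum_mul_sub_le_sum_mul hr hy hfeas S
    rw [sum_mul_sub_eq S c] at h
    nlinarith [mul_nonneg (sub_nonneg.2 hcy) (sub_nonneg.2 hS)]
  · have h := sum_mul_sub_le_sum_mul hr hy hfeas T
    rw [sum_mul_sub_eq T c, ← hST] at h
    nlinarith [mul_nonneg (sub_nonneg.2 hyc.le) (sub_nonneg.2 hT)]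

end FractionalKnapsackDual

open FractionalKnapsackDual

theorem stmt_2_general (Z : ℕ) (ρ r K : Fin Z → ℝ) (B : ℝ)
    (hρ : ∀ k, 0 < ρ k) (hr : ∀ k, 0 ≤ r k) (hK : ∀ k, 0 ≤ K k)
    (σ : Equiv.Perm (Fin Z))
    (hσ : ∀ k l : Fin Z, k ≤ l → K (σ l) / ρ (σ l) ≤ K (σ k) / ρ (σ k))
    (τ : ℕ) (hτ : τ < Z)
    (hτle : ∑ m ∈ Finset.Iio (⟨τ, hτ⟩ : Fin Z), ρ (σ m) * r (σ m) ≤ B)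
    (hτmax : B < ∑ m ∈ Finset.Iic (⟨τ, hτ⟩ : Fin Z), ρ (σ m) * r (σ m))
    (ystar0 : ℝ) (ystar : Fin Z → ℝ)
    (hy0 : ystar0 = K (σ (⟨τ, hτ⟩ : Fin Z)) / ρ (σ (⟨τ, hτ⟩ : Fin Z)))
    (hylt : ∀ k : Fin Z, (k : ℕ) < τ → ystar (σ k) =
      K (σ k) - ρ (σ k) * (K (σ (⟨τ, hτ⟩ : Fin Z)) / ρ (σ (⟨τ, hτ⟩ : Fin Z))))
    (hyge : ∀ k : Fin Z, τ ≤ (k : ℕ) → ystar (σ k) = 0) :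
    (0 ≤ ystar0 ∧ (∀ k, 0 ≤ ystar k) ∧ (∀ k, K k ≤ ρ k * ystar0 + ystar k)) ∧
      (∀ (y0 : ℝ) (y : Fin Z → ℝ), 0 ≤ y0 → (∀ k, 0 ≤ y k) →
        (∀ k, K k ≤ ρ k * y0 + y k) →
        B * ystar0 + ∑ k, r k * ystar k ≤ B * y0 + ∑ k, r k * y k) := by
  set t : Fin Z := ⟨τ, hτ⟩
  set c := K (σ t) / ρ (σ t)
  subst hy0
  have hc : 0 ≤ c := div_nonneg (hK _) (hρ _).le
  have hystar : ∀ j, ystar (σ j) = max (K (σ j) - ρ (σ j) * c) 0 := by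
    intro j
    rcases lt_or_ge (j : ℕ) τ with hj | hj
    · rw [hylt j hj, max_eq_left]
      exact (sub_mul_nonneg_iff_le_div (hρ _)).2 (hσ j t (show j ≤ t from hj.le))
    · rw [hyge j hj, max_eq_right]
      exact (sub_mul_nonpos_iff_div_le (hρ _)).2 (hσ t j (show t ≤ j from hj))
  have hvalue : ∑ k, r k * ystar k = ∑ j ∈ Iio t, r (σ j) * (K (σ j) - ρ (σ j) * c) := by
    rw [← Equiv.sum_comp σ, ← sum_subset (subset_univ (Iio t))]
    · exact sum_congr rfl fun j hj => by rw [hylt j (mem_Iio.1 hj : j < t)]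
    · exact fun j _ hj => by rw [hyge j (not_lt.1 (mt mem_Iio.2 hj) : t ≤ j), mul_zero]
  refine ⟨⟨hc, fun k => ?_, fun k => ?_⟩, fun y₀ y _ hy hfeas => ?_⟩
  · rw [← σ.apply_symm_apply k, hystar]
    exact le_max_right _ _
  · rw [← σ.apply_symm_apply k, hystar]
    linarith [le_max_left (K (σ (σ.symm k)) - ρ (σ (σ.symm k)) * c) 0]
  · have hST : ∑ j ∈ Iio t, r (σ j) * (K (σ j) - ρ (σ j) * c) =
        ∑ j ∈ Iic t, r (σ j) * (K (σ j) - ρ (σ j) * c) := by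
      rw [← Iio_insert, sum_insert notMem_Iio_self, mul_div_cancel₀ _ (hρ _).ne', sub_self,
        mul_zero, zero_add]
    rw [hvalue, ← Equiv.sum_comp σ (fun k => r k * y k)]
    exact add_sum_le_dual_objective (fun j => hr (σ j)) hτle hτmax.le hST
      (fun j => hy (σ j)) (fun j => hfeas (σ j))

/-- The point y* (with y*_0 = K_{σ(τ+1)}/ρ_{σ(τ+1)}, interior sorted
coordinates K_{σ(k)} − ρ_{σ(k)} K_{σ(τ+1)}/ρ_{σ(τ+1)}, zero afterwards) is an optimal
solution of the dual linear program [LD]: it is feasible for [LD], and its dual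
objective value is at most that of every dual-feasible point. Indices are 0-based:
the 1-based index k of the paper corresponds to the 0-based index k-1, so "1 ≤ k ≤ τ"
becomes (k : ℕ) < τ and "k ≥ τ+1" becomes τ ≤ (k : ℕ). -/
theorem stmt_2 (Z : ℕ) (hZ : 1 ≤ Z) (ρ r K : Fin Z → ℝ) (B : ℝ)
    (hρ : ∀ k, 0 < ρ k) (hr : ∀ k, 0 ≤ r k) (hK : ∀ k, 0 ≤ K k)
    (hB : 0 ≤ B) (hfull : B < ∑ k, ρ k * r k)
    (σ : Equiv.Perm (Fin Z))
    (hσ : ∀ k l : Fin Z, k ≤ l → K (σ l) / ρ (σ l) ≤ K (σ k) / ρ (σ k))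
    (τ : ℕ) (hτ : τ < Z)
    (hτle : ∑ m ∈ Finset.Iio (⟨τ, hτ⟩ : Fin Z), ρ (σ m) * r (σ m) ≤ B)
    (hτmax : B < ∑ m ∈ Finset.Iic (⟨τ, hτ⟩ : Fin Z), ρ (σ m) * r (σ m))
    (ystar0 : ℝ) (ystar : Fin Z → ℝ)
    (hy0 : ystar0 = K (σ (⟨τ, hτ⟩ : Fin Z)) / ρ (σ (⟨τ, hτ⟩ : Fin Z)))
    (hylt : ∀ k : Fin Z, (k : ℕ) < τ → ystar (σ k) =
      K (σ k) - ρ (σ k) * (K (σ (⟨τ, hτ⟩ : Fin Z)) / ρ (σ (⟨τ, hτ⟩ : Fin Z))))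
    (hyge : ∀ k : Fin Z, τ ≤ (k : ℕ) → ystar (σ k) = 0) :
    (0 ≤ ystar0 ∧ (∀ k, 0 ≤ ystar k) ∧ (∀ k, K k ≤ ρ k * ystar0 + ystar k)) ∧
      (∀ (y0 : ℝ) (y : Fin Z → ℝ), 0 ≤ y0 → (∀ k, 0 ≤ y k) →
        (∀ k, K k ≤ ρ k * y0 + y k) →
        B * ystar0 + ∑ k, r k * ystar k ≤ B * y0 + ∑ k, r k * y k) :=
  stmt_2_general Z ρ r K B hρ hr hK σ hσ τ hτ hτle hτmax ystar0 ystar hy0 hylt hyge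
end

section
/- For every feasible point y = (y_0, y_1, …, y_Z) of the dual linear program [LD], the dual objective is bounded below as follows: B y_0 + Σ_{k=1}^{Z} r_k y_k ≥ Σ_{k=1}^{τ} r_{σ(k)} K_{σ(k)} + K_{σ(τ+1)} · (B − Σ_{m=1}^{τ} ρ_{σ(m)} r_{σ(m)})/ρ_{σ(τ+1)}. -/
/-!
The lower bound is the value of a primal feasible solution, so it follows from weak duality.
The greedy solution fills the items in the order `σ`: it takes the full amount `r` of the first `τ`
items, spends the remaining budget `B - Σ_{m<τ} ρ r` on item `σ τ`, and nothing on the rest.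
-/

open Finset

theorem sum_mul_le_of_dual_feasible {ι : Type*} [Fintype ι] (ρ r K x y : ι → ℝ) (B y0 : ℝ)
    (hx : ∀ k, 0 ≤ x k) (hxr : ∀ k, x k ≤ r k) (hbudget : ∑ k, ρ k * x k ≤ B)
    (hy0 : 0 ≤ y0) (hy : ∀ k, 0 ≤ y k) (hfeas : ∀ k, K k ≤ ρ k * y0 + y k) :
    ∑ k, x k * K k ≤ B * y0 + ∑ k, r k * y k :=
  calc ∑ k, x k * K k ≤ ∑ k, x k * (ρ k * y0 + y k) :=
        sum_le_sum fun k _ => mul_le_mul_of_nonneg_left (hfeas k) (hx k)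
    _ = (∑ k, ρ k * x k) * y0 + ∑ k, x k * y k := by
        rw [sum_mul, ← sum_add_distrib]
        exact sum_congr rfl fun k _ => by ring
    _ ≤ B * y0 + ∑ k, r k * y k := by
        gcongr with k
        · exact hy k
        · exact hxr k

section GreedyFill

variable {ι : Type*} [LinearOrder ι]

def greedyFill (r : ι → ℝ) (t : ι) (c : ℝ) (m : ι) : ℝ :=
  if m < t then r m else if m = t then c else 0

theorem sum_mul_greedyFill [Fintype ι] [LocallyFiniteOrderBot ι] (f r : ι → ℝ) (t : ι) (c : ℝ) :
    ∑ m, f m * greedyFill r t c m = ∑ m ∈ Iio t, f m * r m + f t * c := by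
  classical
  simp only [greedyFill, mul_ite, mul_zero]
  rw [sum_ite, sum_ite_eq', if_pos (by simp)]
  congr 2
  ext m
  simp

theorem greedyFill_nonneg {r : ι → ℝ} {t : ι} {c : ℝ} (hr : ∀ m, 0 ≤ r m) (hc : 0 ≤ c)
    (m : ι) : 0 ≤ greedyFill r t c m := by
  unfold greedyFill
  split_ifs <;> first | exact hr m | exact hc | exact le_rfl

theorem greedyFill_le {r : ι → ℝ} {t : ι} {c : ℝ} (hr : ∀ m, 0 ≤ r m) (hc : c ≤ r t)
    (m : ι) : greedyFill r t c m ≤ r m := by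
  unfold greedyFill
  split_ifs with _ hmt
  · exact le_rfl
  · exact hmt ▸ hc
  · exact hr m

end GreedyFill

theorem stmt_3_general (Z : ℕ) (ρ r K : Fin Z → ℝ) (B : ℝ)
    (hρ : ∀ k, 0 < ρ k) (hr : ∀ k, 0 ≤ r k)
    (σ : Equiv.Perm (Fin Z))
    (τ : ℕ) (hτ : τ < Z)
    (hτle : ∑ m ∈ Finset.Iio (⟨τ, hτ⟩ : Fin Z), ρ (σ m) * r (σ m) ≤ B)
    (hτmax : B < ∑ m ∈ Finset.Iic (⟨τ, hτ⟩ : Fin Z), ρ (σ m) * r (σ m))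
    (y0 : ℝ) (y : Fin Z → ℝ)
    (hy0 : 0 ≤ y0) (hy : ∀ k, 0 ≤ y k) (hfeas : ∀ k, K k ≤ ρ k * y0 + y k) :
    (∑ k ∈ Finset.Iio (⟨τ, hτ⟩ : Fin Z), r (σ k) * K (σ k)) +
      K (σ (⟨τ, hτ⟩ : Fin Z)) *
        ((B - ∑ m ∈ Finset.Iio (⟨τ, hτ⟩ : Fin Z), ρ (σ m) * r (σ m)) /
          ρ (σ (⟨τ, hτ⟩ : Fin Z))) ≤
      B * y0 + ∑ k, r k * y k := by
  set t : Fin Z := ⟨τ, hτ⟩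
  set c := (B - ∑ m ∈ Iio t, ρ (σ m) * r (σ m)) / ρ (σ t)
  have hρt := hρ (σ t)
  have hc : 0 ≤ c := div_nonneg (by linarith) hρt.le
  have hcr : c ≤ r (σ t) := by
    rw [← Iio_insert, sum_insert (by simp)] at hτmax
    rw [div_le_iff₀ hρt]
    linarith
  have hbudget : ∑ m, ρ (σ m) * greedyFill (r ∘ σ) t c m = B := by
    rw [sum_mul_greedyFill]
    simp only [Function.comp_apply, c]
    field_simp
    ring
  have hweak := sum_mul_le_of_dual_feasible (ρ ∘ σ) (r ∘ σ) (K ∘ σ) (greedyFill (r ∘ σ) t c)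
    (y ∘ σ) B y0 (greedyFill_nonneg (fun m => hr (σ m)) hc)
    (greedyFill_le (fun m => hr (σ m)) hcr) hbudget.le hy0 (fun m => hy (σ m))
    (fun m => hfeas (σ m))
  simp only [mul_comm (greedyFill _ _ _ _), sum_mul_greedyFill, Function.comp_apply,
    Equiv.sum_comp σ fun k => r k * y k] at hweak
  simpa only [mul_comm (K _) (r _)] using hweak

/-- For every feasible point y = (y_0, y_1, …, y_Z) of the dual linear
program [LD], the dual objective B y_0 + Σ_k r_k y_k is bounded below by
Σ_{k=1}^{τ} r_{σ(k)} K_{σ(k)} + K_{σ(τ+1)} (B − Σ_{m=1}^{τ} ρ_{σ(m)} r_{σ(m)})/ρ_{σ(τ+1)}.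
Indices are 0-based: the 1-based index k of the paper corresponds to the 0-based
index k-1; in particular σ(τ+1) of the paper is σ applied to the 0-based index τ. -/
theorem stmt_3 (Z : ℕ) (hZ : 1 ≤ Z) (ρ r K : Fin Z → ℝ) (B : ℝ)
    (hρ : ∀ k, 0 < ρ k) (hr : ∀ k, 0 ≤ r k) (hK : ∀ k, 0 ≤ K k)
    (hB : 0 ≤ B) (hfull : B < ∑ k, ρ k * r k)
    (σ : Equiv.Perm (Fin Z))
    (hσ : ∀ k l : Fin Z, k ≤ l → K (σ l) / ρ (σ l) ≤ K (σ k) / ρ (σ k))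
    (τ : ℕ) (hτ : τ < Z)
    (hτle : ∑ m ∈ Finset.Iio (⟨τ, hτ⟩ : Fin Z), ρ (σ m) * r (σ m) ≤ B)
    (hτmax : B < ∑ m ∈ Finset.Iic (⟨τ, hτ⟩ : Fin Z), ρ (σ m) * r (σ m))
    (y0 : ℝ) (y : Fin Z → ℝ)
    (hy0 : 0 ≤ y0) (hy : ∀ k, 0 ≤ y k) (hfeas : ∀ k, K k ≤ ρ k * y0 + y k) :
    (∑ k ∈ Finset.Iio (⟨τ, hτ⟩ : Fin Z), r (σ k) * K (σ k)) +
      K (σ (⟨τ, hτ⟩ : Fin Z)) *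
        ((B - ∑ m ∈ Finset.Iio (⟨τ, hτ⟩ : Fin Z), ρ (σ m) * r (σ m)) /
          ρ (σ (⟨τ, hτ⟩ : Fin Z))) ≤
      B * y0 + ∑ k, r k * y k :=
  stmt_3_general Z ρ r K B hρ hr σ τ hτ hτle hτmax y0 y hy0 hy hfeas
end

section
/- The point y* ∈ ℝ^{Z+1} defined by y*_0 = K_{σ(τ+1)}/ρ_{σ(τ+1)}, y*_{σ(k)} = K_{σ(k)} − ρ_{σ(k)} K_{σ(τ+1)}/ρ_{σ(τ+1)} for 1 ≤ k ≤ τ, and y*_{σ(k)} = 0 for k ≥ τ+1, is feasible for [LD]: y*_0 ≥ 0, y*_k ≥ 0 for all k ∈ {1,…,Z}, and ρ_k y*_0 + y*_k ≥ K_k for all k ∈ {1,…,Z}. -/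
/-!
Given `y₀`, the cheapest feasible choice of the other coordinates is `y k = (K k - ρ k * y₀)⁺`, and
any `y₀ ≥ 0` with this choice is feasible for [LD]. With `y₀ = K_{σ(τ+1)} / ρ_{σ(τ+1)}` this
positive part is exactly `y*`: since the ratios `K / ρ` decrease along `σ`, the difference
`K_k - ρ_k y₀` is nonnegative on the first `τ` sorted indices and nonpositive on the others.
-/

def IsDualFeasible {ι : Type*} (ρ K : ι → ℝ) (y₀ : ℝ) (y : ι → ℝ) : Prop :=
  0 ≤ y₀ ∧ (∀ k, 0 ≤ y k) ∧ ∀ k, K k ≤ ρ k * y₀ + y k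

theorem isDualFeasible_of_eq_posPart {ι : Type*} {ρ K : ι → ℝ} {y₀ : ℝ} {y : ι → ℝ}
    (hy₀ : 0 ≤ y₀) (hy : ∀ k, y k = (K k - ρ k * y₀)⁺) : IsDualFeasible ρ K y₀ y := by
  refine ⟨hy₀, fun k => hy k ▸ posPart_nonneg _, fun k => ?_⟩
  have := le_posPart (K k - ρ k * y₀)
  rw [hy k]
  linarith

section RatioComparison

variable {α : Type*} [Field α] [LinearOrder α] [IsStrictOrderedRing α] {a b c d : α}

theorem sub_mul_div_nonneg_of_div_le (hb : 0 < b) (h : c / d ≤ a / b) : 0 ≤ a - b * (c / d) :=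
  sub_nonneg.mpr (mul_comm b (c / d) ▸ (le_div_iff₀ hb).mp h)

theorem sub_mul_div_nonpos_of_le_div (hb : 0 < b) (h : a / b ≤ c / d) : a - b * (c / d) ≤ 0 :=
  sub_nonpos.mpr (mul_comm b (c / d) ▸ (div_le_iff₀ hb).mp h)

end RatioComparison

theorem stmt_4_general (Z : ℕ) (ρ K : Fin Z → ℝ)
    (hρ : ∀ k, 0 < ρ k) (hK : ∀ k, 0 ≤ K k)
    (σ : Equiv.Perm (Fin Z))
    (hσ : ∀ k l : Fin Z, k ≤ l → K (σ l) / ρ (σ l) ≤ K (σ k) / ρ (σ k))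
    (τ : ℕ) (hτ : τ < Z)
    (ystar0 : ℝ) (ystar : Fin Z → ℝ)
    (hy0 : ystar0 = K (σ (⟨τ, hτ⟩ : Fin Z)) / ρ (σ (⟨τ, hτ⟩ : Fin Z)))
    (hylt : ∀ k : Fin Z, (k : ℕ) < τ → ystar (σ k) =
      K (σ k) - ρ (σ k) * (K (σ (⟨τ, hτ⟩ : Fin Z)) / ρ (σ (⟨τ, hτ⟩ : Fin Z))))
    (hyge : ∀ k : Fin Z, τ ≤ (k : ℕ) → ystar (σ k) = 0) :
    0 ≤ ystar0 ∧ (∀ k, 0 ≤ ystar k) ∧ (∀ k, K k ≤ ρ k * ystar0 + ystar k) := by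
  set t : Fin Z := ⟨τ, hτ⟩
  have hy : ∀ k, ystar k = (K k - ρ k * ystar0)⁺ := by
    intro k
    obtain ⟨j, rfl⟩ := σ.surjective k
    rcases lt_or_ge (j : ℕ) τ with hj | hj
    · rw [hylt j hj, hy0, posPart_of_nonneg (sub_mul_div_nonneg_of_div_le (hρ _) (hσ j t hj.le))]
    · rw [hyge j hj, hy0, posPart_of_nonpos (sub_mul_div_nonpos_of_le_div (hρ _) (hσ t j hj))]
  exact isDualFeasible_of_eq_posPart (hy0 ▸ div_nonneg (hK _) (hρ _).le) hy

/-- The point y* (with y*_0 = K_{σ(τ+1)}/ρ_{σ(τ+1)}, sorted coordinates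
K_{σ(k)} − ρ_{σ(k)} K_{σ(τ+1)}/ρ_{σ(τ+1)} for 1 ≤ k ≤ τ, and zero for k ≥ τ+1) is
feasible for the dual linear program [LD]: y*_0 ≥ 0, y*_k ≥ 0 for all k, and
ρ_k y*_0 + y*_k ≥ K_k for all k. Indices are 0-based: the 1-based index k of the
paper corresponds to the 0-based index k-1, so "1 ≤ k ≤ τ" becomes (k : ℕ) < τ and
"k ≥ τ+1" becomes τ ≤ (k : ℕ). -/
theorem stmt_4 (Z : ℕ) (hZ : 1 ≤ Z) (ρ r K : Fin Z → ℝ) (B : ℝ)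
    (hρ : ∀ k, 0 < ρ k) (hr : ∀ k, 0 ≤ r k) (hK : ∀ k, 0 ≤ K k)
    (hB : 0 ≤ B) (hfull : B < ∑ k, ρ k * r k)
    (σ : Equiv.Perm (Fin Z))
    (hσ : ∀ k l : Fin Z, k ≤ l → K (σ l) / ρ (σ l) ≤ K (σ k) / ρ (σ k))
    (τ : ℕ) (hτ : τ < Z)
    (hτle : ∑ m ∈ Finset.Iio (⟨τ, hτ⟩ : Fin Z), ρ (σ m) * r (σ m) ≤ B)
    (hτmax : B < ∑ m ∈ Finset.Iic (⟨τ, hτ⟩ : Fin Z), ρ (σ m) * r (σ m))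
    (ystar0 : ℝ) (ystar : Fin Z → ℝ)
    (hy0 : ystar0 = K (σ (⟨τ, hτ⟩ : Fin Z)) / ρ (σ (⟨τ, hτ⟩ : Fin Z)))
    (hylt : ∀ k : Fin Z, (k : ℕ) < τ → ystar (σ k) =
      K (σ k) - ρ (σ k) * (K (σ (⟨τ, hτ⟩ : Fin Z)) / ρ (σ (⟨τ, hτ⟩ : Fin Z))))
    (hyge : ∀ k : Fin Z, τ ≤ (k : ℕ) → ystar (σ k) = 0) :
    0 ≤ ystar0 ∧ (∀ k, 0 ≤ ystar k) ∧ (∀ k, K k ≤ ρ k * ystar0 + ystar k) :=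
  stmt_4_general Z ρ K hρ hK σ hσ τ hτ ystar0 ystar hy0 hylt hyge
end

section
/- The Frank-Wolfe iterates with step size γ_t = 2/(t+2) satisfy the primal convergence bound U(a*) − U(a^{(t)}) ≤ 2C/(t+2) for all t ≥ 1, where a* is any maximizer of U over M. -/
/-!
Concavity and the choice of `s` give `U a* - U a ≤ ⟪∇U a, a* - a⟫ ≤ ⟪∇U a, s - a⟫`, so the
curvature bound turns each step into the recurrence `h (t+1) ≤ (1 - γ_t) h t + γ_t² C / 2` for the
gap `h t = U a* - U (a t)`. With `γ_t = 2 / (t + 2)` induction gives `h t ≤ 2C / (t + 2)`; the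
induction starts at `t = 1` because `γ_0 = 1` erases the initial gap.
-/

open scoped RealInnerProductSpace

theorem ConcaveOn.sub_le_of_hasFDerivAt {E : Type*} [NormedAddCommGroup E] [NormedSpace ℝ E]
    {M : Set E} {U : E → ℝ} {U' : E →L[ℝ] ℝ} {x y : E} (hconc : ConcaveOn ℝ M U)
    (hx : x ∈ M) (hy : y ∈ M) (hU : HasFDerivAt U U' x) :
    U y - U x ≤ U' (y - x) := by
  set ℓ : ℝ →ᵃ[ℝ] E := AffineMap.lineMap x y
  have hline : ConcaveOn ℝ (ℓ ⁻¹' M) (U ∘ ℓ) := hconc.comp_affineMap ℓ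
  have hderiv : HasDerivAt (U ∘ ℓ) (U' (y - x)) 0 :=
    (by simpa [ℓ] using hU : HasFDerivAt U U' (ℓ 0)).comp_hasDerivAt 0
      AffineMap.hasDerivAt_lineMap
  simpa [ℓ, slope_def_field] using
    hline.slope_le_of_hasDerivAt (x := 0) (y := 1) (by simpa [ℓ]) (by simpa [ℓ]) one_pos hderiv

theorem ConcaveOn.sub_le_inner_gradient {E : Type*} [NormedAddCommGroup E]
    [InnerProductSpace ℝ E] [CompleteSpace E] {M : Set E} {U : E → ℝ} {x y : E}
    (hconc : ConcaveOn ℝ M U) (hx : x ∈ M) (hy : y ∈ M) (hU : DifferentiableAt ℝ U x) :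
    U y - U x ≤ ⟪gradient U x, y - x⟫ :=
  hconc.sub_le_of_hasFDerivAt hx hy hU.hasGradientAt.hasFDerivAt

theorem frankWolfe_step_gap_le {E : Type*} [NormedAddCommGroup E] [InnerProductSpace ℝ E]
    [CompleteSpace E] {M : Set E} {U : E → ℝ} {C γ : ℝ} {x s y : E}
    (hconc : ConcaveOn ℝ M U) (hx : x ∈ M) (hy : y ∈ M) (hU : DifferentiableAt ℝ U x)
    (hs : ⟪gradient U x, y⟫ ≤ ⟪gradient U x, s⟫) (hγ : 0 ≤ γ)
    (hcurv : U x + γ * ⟪gradient U x, s - x⟫ - γ ^ 2 / 2 * C ≤ U (x + γ • (s - x))) :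
    U y - U (x + γ • (s - x)) ≤ (1 - γ) * (U y - U x) + γ ^ 2 / 2 * C := by
  have hgap : U y - U x ≤ ⟪gradient U x, s - x⟫ :=
    calc U y - U x ≤ ⟪gradient U x, y - x⟫ := hconc.sub_le_inner_gradient hx hy hU
      _ ≤ ⟪gradient U x, s - x⟫ := by simpa only [inner_sub_right] using sub_le_sub_right hs _
  nlinarith [mul_le_mul_of_nonneg_left hgap hγ]

theorem frankWolfe_gap_le_of_recurrence {h : ℕ → ℝ} {C : ℝ} (hC : 0 ≤ C)
    (hrec : ∀ t : ℕ, h (t + 1) ≤ (1 - 2 / ((t : ℝ) + 2)) * h t + (2 / ((t : ℝ) + 2)) ^ 2 / 2 * C) :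
    ∀ t : ℕ, 1 ≤ t → h t ≤ 2 * C / ((t : ℝ) + 2) := by
  intro t ht
  induction t, ht using Nat.le_induction with
  | base =>
    have h1 := hrec 0
    norm_num at h1 ⊢
    linarith
  | succ n _ ih =>
    have hcoeff : 0 ≤ 1 - 2 / ((n : ℝ) + 2) := by
      rw [sub_nonneg, div_le_one (by positivity)]; linarith [(n.cast_nonneg : (0 : ℝ) ≤ n)]
    calc h (n + 1) ≤ (1 - 2 / ((n : ℝ) + 2)) * h n + (2 / ((n : ℝ) + 2)) ^ 2 / 2 * C := hrec n
      _ ≤ (1 - 2 / ((n : ℝ) + 2)) * (2 * C / ((n : ℝ) + 2)) + (2 / ((n : ℝ) + 2)) ^ 2 / 2 * C := by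
        gcongr
      _ = 2 * C * (n + 1) / (n + 2) ^ 2 := by field_simp; ring
      _ ≤ 2 * C / ((↑(n + 1) : ℝ) + 2) := by
        rw [div_le_div_iff₀ (by positivity) (by positivity)]
        push_cast
        nlinarith

theorem stmt_9_general (d : ℕ) (M : Set (EuclideanSpace ℝ (Fin d)))
    (hMconv : Convex ℝ M)
    (U : EuclideanSpace ℝ (Fin d) → ℝ) (hU : ContDiff ℝ 1 U)
    (hconc : ConcaveOn ℝ M U) (C : ℝ) (hC : 0 ≤ C)
    (hcurv : ∀ x ∈ M, ∀ s ∈ M, ∀ γ ∈ Set.Icc (0 : ℝ) 1,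
      U x + γ * ⟪gradient U x, s - x⟫ - γ ^ 2 / 2 * C ≤ U (x + γ • (s - x)))
    (a s : ℕ → EuclideanSpace ℝ (Fin d)) (ha0 : a 0 ∈ M)
    (hsM : ∀ t, s t ∈ M)
    (hsmax : ∀ t, ∀ x ∈ M, ⟪gradient U (a t), x⟫ ≤ ⟪gradient U (a t), s t⟫)
    (hupd : ∀ t : ℕ, a (t + 1) = a t + (2 / ((t : ℝ) + 2)) • (s t - a t))
    (astar : EuclideanSpace ℝ (Fin d)) (hastar : astar ∈ M) :
    ∀ t : ℕ, 1 ≤ t → U astar - U (a t) ≤ 2 * C / ((t : ℝ) + 2) := by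
  have hγ (t : ℕ) : 2 / ((t : ℝ) + 2) ∈ Set.Icc (0 : ℝ) 1 :=
    ⟨by positivity, (div_le_one (by positivity)).2 (by linarith [(t.cast_nonneg : (0 : ℝ) ≤ t)])⟩
  have haM (t : ℕ) : a t ∈ M := by
    induction t with
    | zero => exact ha0
    | succ n ih => exact hupd n ▸ hMconv.add_smul_sub_mem ih (hsM n) (hγ n)
  refine frankWolfe_gap_le_of_recurrence (h := fun t => U astar - U (a t)) hC fun t => ?_
  rw [hupd t]
  exact frankWolfe_step_gap_le hconc (haM t) hastar (hU.differentiable one_ne_zero _)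
    (hsmax t astar hastar) (hγ t).1 (hcurv _ (haM t) _ (hsM t) _ (hγ t))

/-- Frank-Wolfe with step size γ_t = 2/(t+2) on a nonempty convex compact
set M, for a continuously differentiable function U concave on M with curvature
constant C ≥ 0, satisfies the primal bound U(a*) − U(a^{(t)}) ≤ 2C/(t+2) for all
t ≥ 1, where a* is any maximizer of U over M. -/
theorem stmt_9 (d : ℕ) (M : Set (EuclideanSpace ℝ (Fin d)))
    (hMne : M.Nonempty) (hMconv : Convex ℝ M) (hMcomp : IsCompact M)
    (U : EuclideanSpace ℝ (Fin d) → ℝ) (hU : ContDiff ℝ 1 U)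
    (hconc : ConcaveOn ℝ M U) (C : ℝ) (hC : 0 ≤ C)
    (hcurv : ∀ x ∈ M, ∀ s ∈ M, ∀ γ ∈ Set.Icc (0 : ℝ) 1,
      U x + γ * ⟪gradient U x, s - x⟫ - γ ^ 2 / 2 * C ≤ U (x + γ • (s - x)))
    (a s : ℕ → EuclideanSpace ℝ (Fin d)) (ha0 : a 0 ∈ M)
    (hsM : ∀ t, s t ∈ M)
    (hsmax : ∀ t, ∀ x ∈ M, ⟪gradient U (a t), x⟫ ≤ ⟪gradient U (a t), s t⟫)
    (hupd : ∀ t : ℕ, a (t + 1) = a t + (2 / ((t : ℝ) + 2)) • (s t - a t))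
    (astar : EuclideanSpace ℝ (Fin d)) (hastar : astar ∈ M)
    (hmax : ∀ x ∈ M, U x ≤ U astar) :
    ∀ t : ℕ, 1 ≤ t → U astar - U (a t) ≤ 2 * C / ((t : ℝ) + 2) :=
  stmt_9_general d M hMconv U hU hconc C hC hcurv a s ha0 hsM hsmax hupd astar hastar
end
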